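/- For a simply laced root system and a dominant weight λ, the firing span equals the span of the simple roots that actually get fired along dominant firing sequences: FS_{Φ⁺}(λ) = Span_ℝ{αᵢ : there exists μ with λ →* μ and μ → μ + αᵢ}. -/

import Mathlib

/-!
Let `U` be the span of the fired simple roots; only `FS(λ) ≤ U` needs an argument. Along a
firing sequence `λ →* μ` one maintains a dominant weight `ν` reachable from `λ` with `ν - λ ∈ U`,
together with a product `w` of reflections in roots of `U` such that `w μ = ν`. When `μ` fires
`α`, the root `β = w α` is orthogonal to `ν`; dominance of `ν` puts `β` in the span of the simple
roots orthogonal to `ν`, all of which fire at `ν` and hence lie in `U`. The highest element `θ`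
of the orbit of `β` under reflections in that span is a positive root, dominant for the
stabiliser of `ν`, and simple lacing makes `ν + θ` dominant; so `ν` fires `θ`, and the
reflections carrying `β` to `θ` fix `ν`. Since `w v - v ∈ U` for all `v`, finally
`μ - λ = (ν - λ) - (w μ - μ) ∈ U`.
-/

open scoped RealInnerProductSpace

noncomputable section

namespace CF

variable {V : Type*} [NormedAddCommGroup V] [InnerProductSpace ℝ V]

/-- The coroot `α∨ = 2α/⟨α,α⟩`. -/
def coroot (α : V) : V := (2 / ⟪α, α⟫) • α

/-- A reduced crystallographic root system in `V`. -/
def IsRootSystem (Φ : Set V) : Prop :=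
  Φ.Finite ∧ (0 : V) ∉ Φ ∧ Submodule.span ℝ Φ = ⊤ ∧
    (∀ α ∈ Φ, ∀ β ∈ Φ, β - ⟪β, coroot α⟫ • α ∈ Φ) ∧
    (∀ α ∈ Φ, ∀ t : ℝ, t • α ∈ Φ → t = 1 ∨ t = -1) ∧
    (∀ α ∈ Φ, ∀ β ∈ Φ, ∃ n : ℤ, ⟪β, coroot α⟫ = (n : ℝ))

/-- A choice of positive roots `Φ⁺ ⊆ Φ` (exactly one of `±α` is positive, and the positive
roots lie strictly on one side of a hyperplane). -/
def IsPositiveSystem (Φ Φp : Set V) : Prop :=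
  Φp ⊆ Φ ∧ (∀ α ∈ Φ, (α ∈ Φp ∨ -α ∈ Φp) ∧ ¬(α ∈ Φp ∧ -α ∈ Φp)) ∧
    ∃ ℓ : V →ₗ[ℝ] ℝ, ∀ α ∈ Φp, 0 < ℓ α

/-- The weight lattice `P = {v : ⟨v, α∨⟩ ∈ ℤ for all α ∈ Φ}`. -/
def weightLattice (Φ : Set V) : Set V :=
  {v | ∀ α ∈ Φ, ∃ n : ℤ, ⟪v, coroot α⟫ = (n : ℝ)}

/-- Central-firing: `λ → λ + α` whenever `α ∈ Φ⁺` and `⟨λ, α∨⟩ = 0`. -/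
def fire (Φp : Set V) (lam mu : V) : Prop :=
  ∃ α ∈ Φp, ⟪lam, coroot α⟫ = 0 ∧ mu = lam + α

/-- The Weyl group: the group of linear isometries generated by the reflections `s_α`, `α ∈ Φ`. -/
def weylGroup (Φ : Set V) : Subgroup (V ≃ₗᵢ[ℝ] V) :=
  Subgroup.closure {g | ∃ α ∈ Φ, ∀ v, g v = v - ⟪v, coroot α⟫ • α}

/-- `v` and `w` lie in the same Weyl group orbit. -/
def sameOrbit (Φ : Set V) (v w : V) : Prop := ∃ g ∈ weylGroup Φ, g v = w

def weylOrbit (Φ : Set V) (v : V) : Set V := {w | sameOrbit Φ v w}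

/-- The root lattice `Q`. -/
def rootLattice (Φ : Set V) : AddSubgroup V := AddSubgroup.closure Φ

/-- `Π^Q(λ)`: the points of the permutohedron `Π(λ) = ConvexHull(Wλ)` lying in `λ + Q`. -/
def permQ (Φ : Set V) (lam : V) : Set V :=
  {mu | mu ∈ convexHull ℝ (weylOrbit Φ lam) ∧ lam - mu ∈ rootLattice Φ}

def IsDominant (Δ : Set V) (lam : V) : Prop := ∀ a ∈ Δ, 0 ≤ ⟪lam, coroot a⟫

def IsStrictlyDominant (Δ : Set V) (lam : V) : Prop := ∀ a ∈ Δ, 0 < ⟪lam, coroot a⟫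

/-- A minuscule weight: a nonzero dominant weight whose `Π^Q` consists of its Weyl orbit. -/
def IsMinuscule (Φ Δ : Set V) (w : V) : Prop :=
  w ≠ 0 ∧ IsDominant Δ w ∧ ∀ mu ∈ permQ Φ w, sameOrbit Φ w mu

/-- `Δ` is a system of simple roots for the positive system `Φ⁺`. -/
def IsSimpleSystem (Φp : Set V) (Δ : Finset V) : Prop :=
  (Δ : Set V) ⊆ Φp ∧ LinearIndependent ℝ (fun a : (Δ : Set V) => (a : V)) ∧
    ∀ α ∈ Φp, ∃ c : V → ℝ, (∀ a ∈ Δ, 0 ≤ c a) ∧ α = ∑ a ∈ Δ, c a • a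

def IsSimplyLaced (Φ : Set V) : Prop := ∀ α ∈ Φ, ∀ β ∈ Φ, ⟪α, α⟫ = ⟪β, β⟫

/-- Irreducibility: `Φ` cannot be split into two nonempty mutually orthogonal parts. -/
def IsIrreducibleRS (Φ : Set V) : Prop :=
  ¬ ∃ S T : Set V, S.Nonempty ∧ T.Nonempty ∧ S ∪ T = Φ ∧ ∀ a ∈ S, ∀ b ∈ T, ⟪a, b⟫ = 0

/-- The firing span `FS_S(λ) = Span_ℝ{μ − λ : λ →* μ}`. -/
def firingSpan (Φp : Set V) (lam : V) : Submodule ℝ V :=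
  Submodule.span ℝ {d | ∃ mu, Relation.ReflTransGen (fire Φp) lam mu ∧ d = mu - lam}

/-- Central-firing on Weyl orbits: `Wλ → Wμ` iff some representatives fire. -/
def ofire (Φ Φp : Set V) (lam mu : V) : Prop :=
  ∃ lam' mu', sameOrbit Φ lam lam' ∧ sameOrbit Φ mu mu' ∧ fire Φp lam' mu'

/-- Connectivity of roots within a subset `Ψ` (via non-orthogonality). -/
def sameComponent (Ψ : Set V) (β γ : V) : Prop :=
  Relation.ReflTransGen (fun x y => x ∈ Ψ ∧ y ∈ Ψ ∧ ⟪x, y⟫ ≠ 0) β γ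

/-- Confluence of central-firing from `λ`: all maximal firing sequences from `λ`
terminate at the same weight. -/
def ConfluentFrom (S : Set V) (lam : V) : Prop :=
  ∀ mu₁ mu₂ : V, Relation.ReflTransGen (fire S) lam mu₁ → (¬ ∃ ν, fire S mu₁ ν) →
    Relation.ReflTransGen (fire S) lam mu₂ → (¬ ∃ ν, fire S mu₂ ν) → mu₁ = mu₂

lemma inner_coroot (v γ : V) : ⟪v, coroot γ⟫ = 2 / ⟪γ, γ⟫ * ⟪v, γ⟫ := by
  rw [coroot, real_inner_smul_right]

lemma inner_coroot_eq_zero_iff {v γ : V} : ⟪v, coroot γ⟫ = 0 ↔ ⟪v, γ⟫ = 0 := by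
  rcases eq_or_ne γ 0 with rfl | hγ
  · simp [coroot]
  · have : 2 / ⟪γ, γ⟫ ≠ 0 := div_ne_zero two_ne_zero (inner_self_ne_zero.2 hγ)
    rw [inner_coroot, mul_eq_zero, or_iff_right this]

lemma inner_nonneg_of_inner_coroot_nonneg {v γ : V} (h : 0 ≤ ⟪v, coroot γ⟫) : 0 ≤ ⟪v, γ⟫ := by
  rcases eq_or_ne γ 0 with rfl | hγ
  · simp
  · rw [inner_coroot] at h
    exact nonneg_of_mul_nonneg_right h (div_pos two_pos (real_inner_self_pos.2 hγ))

lemma inner_self_coroot {γ : V} (hγ : γ ≠ 0) : ⟪γ, coroot γ⟫ = 2 := by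
  rw [inner_coroot, div_mul_cancel₀ _ (inner_self_ne_zero.2 hγ)]

lemma neg_one_le_inner_coroot {θ b : V} (hlen : ⟪θ, θ⟫ = ⟪b, b⟫) (hb : b ≠ 0)
    (hθb : θ + b ≠ 0) (hint : ∃ n : ℤ, ⟪θ, coroot b⟫ = n) : -1 ≤ ⟪θ, coroot b⟫ := by
  obtain ⟨n, hn⟩ := hint
  have hbb : 0 < ⟪b, b⟫ := real_inner_self_pos.2 hb
  have hnorm : ⟪θ + b, θ + b⟫ = ⟪b, b⟫ * (2 + ⟪θ, coroot b⟫) := by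
    rw [real_inner_add_add_self, hlen, inner_coroot, real_inner_comm]
    field_simp
    ring
  have hpos : 0 < ⟪b, b⟫ * (2 + ⟪θ, coroot b⟫) := hnorm ▸ real_inner_self_pos.2 hθb
  have hn2 : -2 < (n : ℝ) := by nlinarith
  rw [hn]
  exact_mod_cast (show (-2 : ℤ) < n by exact_mod_cast hn2)

def rootReflection (γ : V) : Module.End ℝ V := Module.preReflection γ (innerₗ V (coroot γ))

lemma rootReflection_apply (γ v : V) : rootReflection γ v = v - ⟪v, coroot γ⟫ • γ := by
  rw [rootReflection, Module.preReflection_apply, innerₗ_apply_apply, real_inner_comm]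

lemma rootReflection_self {γ : V} (hγ : γ ≠ 0) : rootReflection γ γ = -γ := by
  rw [rootReflection_apply, inner_self_coroot hγ, two_smul]
  abel

lemma inner_rootReflection_rootReflection (γ x y : V) :
    ⟪rootReflection γ x, rootReflection γ y⟫ = ⟪x, y⟫ := by
  rcases eq_or_ne γ 0 with rfl | hγ
  · simp [rootReflection_apply]
  have hγγ : ⟪γ, γ⟫ ≠ 0 := inner_self_ne_zero.2 hγ
  simp only [rootReflection_apply, inner_coroot, inner_sub_left, inner_sub_right,
    real_inner_smul_left, real_inner_smul_right, real_inner_comm γ x, real_inner_comm γ y]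
  field_simp
  ring

def reflMonoid (S : Set V) : Submonoid (Module.End ℝ V) :=
  Submonoid.closure (rootReflection '' S)

section reflMonoid

variable {S : Set V} {w : Module.End ℝ V}

lemma reflMonoid_mono {T : Set V} (h : S ⊆ T) : reflMonoid S ≤ reflMonoid T :=
  Submonoid.closure_mono (Set.image_mono h)

lemma rootReflection_mem_reflMonoid {a : V} (ha : a ∈ S) : rootReflection a ∈ reflMonoid S :=
  Submonoid.subset_closure (Set.mem_image_of_mem _ ha)

lemma inner_map_map_of_mem_reflMonoid (hw : w ∈ reflMonoid S) (x y : V) :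
    ⟪w x, w y⟫ = ⟪x, y⟫ := by
  induction hw using Submonoid.closure_induction generalizing x y with
  | mem _ h =>
    obtain ⟨a, -, rfl⟩ := h
    exact inner_rootReflection_rootReflection a x y
  | one => rfl
  | mul u u' _ _ hu hu' => rw [Module.End.mul_apply, Module.End.mul_apply, hu, hu']

lemma mapsTo_of_mem_reflMonoid {Φ : Set V} (hΦ : IsRootSystem Φ) (hS : S ⊆ Φ)
    (hw : w ∈ reflMonoid S) : Set.MapsTo w Φ Φ := by
  induction hw using Submonoid.closure_induction with
  | mem _ h =>
    obtain ⟨a, ha, rfl⟩ := h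
    intro β hβ
    rw [rootReflection_apply]
    exact hΦ.2.2.2.1 a (hS ha) β hβ
  | one => exact Set.mapsTo_id Φ
  | mul u u' _ _ hu hu' => exact hu.comp hu'

lemma apply_sub_mem_of_mem_reflMonoid {U : Submodule ℝ V} (hS : S ⊆ U)
    (hw : w ∈ reflMonoid S) (v : V) : w v - v ∈ U := by
  induction hw using Submonoid.closure_induction generalizing v with
  | mem _ h =>
    obtain ⟨a, ha, rfl⟩ := h
    rw [rootReflection_apply, sub_sub_cancel_left]
    exact U.neg_mem (U.smul_mem _ (hS ha))
  | one => simp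
  | mul u u' _ _ hu hu' =>
    rw [Module.End.mul_apply, ← sub_add_sub_cancel]
    exact U.add_mem (hu _) (hu' v)

lemma apply_eq_self_of_mem_reflMonoid {v : V} (hv : ∀ a ∈ S, ⟪v, a⟫ = 0)
    (hw : w ∈ reflMonoid S) : w v = v := by
  induction hw using Submonoid.closure_induction with
  | mem _ h =>
    obtain ⟨a, ha, rfl⟩ := h
    rw [rootReflection_apply, inner_coroot_eq_zero_iff.2 (hv a ha), zero_smul, sub_zero]
  | one => rfl
  | mul u u' _ _ hu hu' => rw [Module.End.mul_apply, hu', hu]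

end reflMonoid

section RootSystem

variable {Φ Φp : Set V} {Δ : Finset V}

lemma exists_reflMonoid_forall_le (hΦ : IsRootSystem Φ) {S : Set V} (hS : S ⊆ Φ) {β : V}
    (hβ : β ∈ Φ) (ℓ : V →ₗ[ℝ] ℝ) :
    ∃ u ∈ reflMonoid S, ∀ u' ∈ reflMonoid S, ℓ (u' β) ≤ ℓ (u β) := by
  have horbit : (fun u : Module.End ℝ V => u β) '' reflMonoid S ⊆ Φ := by
    rintro _ ⟨u, hu, rfl⟩
    exact mapsTo_of_mem_reflMonoid hΦ hS hu hβ
  obtain ⟨_, ⟨u, hu, rfl⟩, hmax⟩ := Set.exists_max_image _ ℓ (hΦ.1.subset horbit)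
    ⟨β, 1, one_mem _, rfl⟩
  exact ⟨u, hu, fun u' hu' => hmax _ ⟨u', hu', rfl⟩⟩

lemma inner_coroot_nonneg_of_forall_le {S : Set V} {u : Module.End ℝ V} {β a : V}
    {ℓ : V →ₗ[ℝ] ℝ} (hu : u ∈ reflMonoid S) (hmax : ∀ u' ∈ reflMonoid S, ℓ (u' β) ≤ ℓ (u β))
    (ha : a ∈ S) (hℓa : 0 < ℓ a) : 0 ≤ ⟪u β, coroot a⟫ := by
  have h := hmax _ (mul_mem (rootReflection_mem_reflMonoid ha) hu)
  rw [Module.End.mul_apply, rootReflection_apply, map_sub, map_smul, smul_eq_mul] at h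
  exact (mul_nonneg_iff_of_pos_right hℓa).1 (by linarith)

lemma IsPositiveSystem.add_ne_zero (hp : IsPositiveSystem Φ Φp) {a b : V} (ha : a ∈ Φp)
    (hb : b ∈ Φp) : a + b ≠ 0 := by
  obtain ⟨-, -, ℓ, hℓ⟩ := hp
  intro h
  have := congrArg ℓ h
  rw [map_add, map_zero] at this
  linarith [hℓ a ha, hℓ b hb]

lemma add_mem_weightLattice (hΦ : IsRootSystem Φ) {ν θ : V} (hν : ν ∈ weightLattice Φ)
    (hθ : θ ∈ Φ) : ν + θ ∈ weightLattice Φ := by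
  intro γ hγ
  obtain ⟨n, hn⟩ := hν γ hγ
  obtain ⟨m, hm⟩ := hΦ.2.2.2.2.2 γ hγ θ hθ
  exact ⟨n + m, by rw [inner_add_left, hn, hm, Int.cast_add]⟩

def parabolicSimples (Δ : Finset V) (ν : V) : Set V := {a | a ∈ Δ ∧ ⟪ν, a⟫ = 0}

lemma inner_eq_zero_of_mem_span_parabolicSimples {ν x : V}
    (hx : x ∈ Submodule.span ℝ (parabolicSimples Δ ν)) : ⟪ν, x⟫ = 0 :=
  (Submodule.span_le (p := LinearMap.ker (innerₗ V ν))).2 (fun _ ha => ha.2) hx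

lemma mem_span_parabolicSimples (hΔ : IsSimpleSystem Φp Δ) {ν β : V}
    (hdom : IsDominant (Δ : Set V) ν) (hβ : β ∈ Φp) (hνβ : ⟪ν, β⟫ = 0) :
    β ∈ Submodule.span ℝ (parabolicSimples Δ ν) := by
  obtain ⟨c, hc, rfl⟩ := hΔ.2.2 β hβ
  have hterm : ∀ a ∈ Δ, 0 ≤ c a * ⟪ν, a⟫ := fun a ha =>
    mul_nonneg (hc a ha) (inner_nonneg_of_inner_coroot_nonneg (hdom a ha))
  have hsum : ∑ a ∈ Δ, c a * ⟪ν, a⟫ = 0 := by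
    simpa only [inner_sum, real_inner_smul_right] using hνβ
  refine Submodule.sum_mem _ fun a ha => ?_
  rcases mul_eq_zero.1 ((Finset.sum_eq_zero_iff_of_nonneg hterm).1 hsum a ha) with h | h
  · rw [h, zero_smul]
    exact Submodule.zero_mem _
  · exact Submodule.smul_mem _ _ (Submodule.subset_span ⟨ha, h⟩)

/-- Off the simple roots orthogonal to `ν`, `ν` pairs to at least `1` by integrality, and the
positive root `θ` pairs to at least `-1` with a simple root by simple lacing. -/
lemma isDominant_add (hΦ : IsRootSystem Φ) (hp : IsPositiveSystem Φ Φp)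
    (hΔ : (Δ : Set V) ⊆ Φp) (hsl : IsSimplyLaced Φ) {ν θ : V} (hν : ν ∈ weightLattice Φ)
    (hdom : IsDominant (Δ : Set V) ν) (hθ : θ ∈ Φp)
    (hθJ : ∀ a ∈ parabolicSimples Δ ν, 0 ≤ ⟪θ, coroot a⟫) : IsDominant (Δ : Set V) (ν + θ) := by
  intro b hb
  have hbΦ : b ∈ Φ := hp.1 (hΔ hb)
  have hb0 : b ≠ 0 := fun h => hΦ.2.1 (h ▸ hbΦ)
  rw [inner_add_left]
  by_cases hνb : ⟪ν, b⟫ = 0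
  · linarith [inner_coroot_eq_zero_iff.2 hνb, hθJ b ⟨hb, hνb⟩]
  · obtain ⟨n, hn⟩ := hν b hbΦ
    have hn0 : (0 : ℝ) < n :=
      hn ▸ (hdom b hb).lt_of_ne (fun h => hνb (inner_coroot_eq_zero_iff.1 h.symm))
    have hn1 : (1 : ℝ) ≤ n := by exact_mod_cast (show (0 : ℤ) < n by exact_mod_cast hn0)
    have hθb := neg_one_le_inner_coroot (hsl θ (hp.1 hθ) b hbΦ) hb0
      (hp.add_ne_zero hθ (hΔ hb)) (hΦ.2.2.2.2.2 b hbΦ θ (hp.1 hθ))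
    linarith

lemma exists_dominant_add_of_inner_eq_zero
    (hΦ : IsRootSystem Φ) (hp : IsPositiveSystem Φ Φp) (hΔ : IsSimpleSystem Φp Δ)
    (hsl : IsSimplyLaced Φ) {ν β : V} (hν : ν ∈ weightLattice Φ)
    (hdom : IsDominant (Δ : Set V) ν) (hβ : β ∈ Φ) (hνβ : ⟪ν, β⟫ = 0) :
    ∃ θ ∈ Φp, θ ∈ Submodule.span ℝ (parabolicSimples Δ ν) ∧ IsDominant (Δ : Set V) (ν + θ) ∧
      ∃ u ∈ reflMonoid (Φ ∩ Submodule.span ℝ (parabolicSimples Δ ν)), u (ν + β) = ν + θ := by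
  set P := Submodule.span ℝ (parabolicSimples Δ ν)
  obtain ⟨ℓ, hℓ⟩ := hp.2.2
  have hβ0 : β ≠ 0 := fun h => hΦ.2.1 (h ▸ hβ)
  have hβP : β ∈ P := by
    rcases (hp.2.1 β hβ).1 with h | h
    · exact mem_span_parabolicSimples hΔ hdom h hνβ
    · have hνβ' : ⟪ν, -β⟫ = 0 := by rw [inner_neg_right, hνβ, neg_zero]
      simpa using P.neg_mem (mem_span_parabolicSimples hΔ hdom h hνβ')
  obtain ⟨u, hu, hmax⟩ := exists_reflMonoid_forall_le hΦ Set.inter_subset_left hβ ℓ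
  have huν : u ν = ν := apply_eq_self_of_mem_reflMonoid
    (fun _ ha => inner_eq_zero_of_mem_span_parabolicSimples (Δ := Δ) ha.2) hu
  have hθΦ : u β ∈ Φ := mapsTo_of_mem_reflMonoid hΦ Set.inter_subset_left hu hβ
  have hθP : u β ∈ P := by
    simpa using P.add_mem (apply_sub_mem_of_mem_reflMonoid Set.inter_subset_right hu β) hβP
  -- The orbit contains both `β` and `-β`, and one of them is positive.
  have hℓθ : 0 < ℓ (u β) := by
    have h₁ := hmax 1 (one_mem _)
    have h₂ := hmax _ (rootReflection_mem_reflMonoid ⟨hβ, hβP⟩)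
    rw [Module.End.one_apply] at h₁
    rw [rootReflection_self hβ0, map_neg] at h₂
    rcases (hp.2.1 β hβ).1 with h | h
    · linarith [hℓ _ h]
    · linarith [hℓ _ h, map_neg ℓ β]
  have hθ : u β ∈ Φp := by
    refine (hp.2.1 _ hθΦ).1.resolve_right fun h => ?_
    linarith [hℓ _ h, map_neg ℓ (u β)]
  refine ⟨u β, hθ, hθP, isDominant_add hΦ hp hΔ.1 hsl hν hdom hθ fun a ha => ?_,
    u, hu, by rw [map_add, huν]⟩
  exact inner_coroot_nonneg_of_forall_le hu hmax ⟨hp.1 (hΔ.1 ha.1), Submodule.subset_span ha⟩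
    (hℓ a (hΔ.1 ha.1))

end RootSystem

def firedSimples (Φp : Set V) (Δ : Finset V) (lam : V) : Set V :=
  {a | a ∈ Δ ∧ ∃ mu, Relation.ReflTransGen (fire Φp) lam mu ∧ fire Φp mu (mu + a)}

section Firing

variable {Φ Φp : Set V} {Δ : Finset V} {lam : V}

lemma span_parabolicSimples_le_span_firedSimples (hΔ : (Δ : Set V) ⊆ Φp) {ν : V}
    (hν : Relation.ReflTransGen (fire Φp) lam ν) :
    Submodule.span ℝ (parabolicSimples Δ ν) ≤ Submodule.span ℝ (firedSimples Φp Δ lam) :=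
  Submodule.span_mono fun a ha =>
    ⟨ha.1, ν, hν, a, hΔ ha.1, inner_coroot_eq_zero_iff.2 ha.2, rfl⟩

lemma exists_dominant_of_reflTransGen_fire (hΦ : IsRootSystem Φ) (hp : IsPositiveSystem Φ Φp)
    (hΔ : IsSimpleSystem Φp Δ) (hsl : IsSimplyLaced Φ) (hlam : lam ∈ weightLattice Φ)
    (hdom : IsDominant (Δ : Set V) lam) {μ : V} (hμ : Relation.ReflTransGen (fire Φp) lam μ) :
    ∃ ν, Relation.ReflTransGen (fire Φp) lam ν ∧ IsDominant (Δ : Set V) ν ∧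
      ν ∈ weightLattice Φ ∧ ν - lam ∈ Submodule.span ℝ (firedSimples Φp Δ lam) ∧
      ∃ w ∈ reflMonoid (Φ ∩ Submodule.span ℝ (firedSimples Φp Δ lam)), w μ = ν := by
  induction hμ with
  | refl => exact ⟨lam, .refl, hdom, hlam, by simp, 1, one_mem _, rfl⟩
  | tail _ hfire ih =>
    obtain ⟨ν, hν, hνdom, hνP, hνU, w, hw, hwμ⟩ := ih
    obtain ⟨α, hα, hμα, rfl⟩ := hfire
    have hνα : ⟪ν, w α⟫ = 0 := by
      rw [← hwμ, inner_map_map_of_mem_reflMonoid hw]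
      exact inner_coroot_eq_zero_iff.1 hμα
    obtain ⟨θ, hθ, hθJ, hθdom, u, hu, huθ⟩ := exists_dominant_add_of_inner_eq_zero hΦ hp hΔ hsl
      hνP hνdom (mapsTo_of_mem_reflMonoid hΦ Set.inter_subset_left hw (hp.1 hα)) hνα
    have hJU := span_parabolicSimples_le_span_firedSimples hΔ.1 hν
    have hνθ : fire Φp ν (ν + θ) :=
      ⟨θ, hθ, inner_coroot_eq_zero_iff.2 (inner_eq_zero_of_mem_span_parabolicSimples hθJ), rfl⟩
    refine ⟨ν + θ, hν.tail hνθ, hθdom, add_mem_weightLattice hΦ hνP (hp.1 hθ), ?_, u * w,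
      mul_mem (reflMonoid_mono (Set.inter_subset_inter_right _ hJU) hu) hw, ?_⟩
    · rw [add_sub_right_comm]
      exact add_mem hνU (hJU hθJ)
    · rw [Module.End.mul_apply, map_add, hwμ, huθ]

end Firing

theorem firingSpan_eq_span_fired_simples_general (Φ Φp Δ : Finset V)
    (hΦ : IsRootSystem (Φ : Set V)) (hp : IsPositiveSystem (Φ : Set V) (Φp : Set V))
    (hΔ : IsSimpleSystem (Φp : Set V) Δ)
    (hsl : IsSimplyLaced (Φ : Set V))
    (lam : V) (hlam : lam ∈ weightLattice (Φ : Set V))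
    (hdom : IsDominant (Δ : Set V) lam) :
    firingSpan (Φp : Set V) lam =
      Submodule.span ℝ {a : V | a ∈ Δ ∧
        ∃ mu, Relation.ReflTransGen (fire (Φp : Set V)) lam mu ∧
          fire (Φp : Set V) mu (mu + a)} := by
  apply le_antisymm
  · refine Submodule.span_le.2 ?_
    rintro _ ⟨μ, hμ, rfl⟩
    obtain ⟨ν, -, -, -, hνU, w, hw, hwμ⟩ :=
      exists_dominant_of_reflTransGen_fire hΦ hp hΔ hsl hlam hdom hμ
    have hwU := apply_sub_mem_of_mem_reflMonoid Set.inter_subset_right hw μ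
    rw [hwμ] at hwU
    have h := sub_mem hνU hwU
    rw [sub_sub_sub_cancel_left] at h
    exact h
  · refine Submodule.span_le.2 ?_
    rintro a ⟨-, μ, hμ, hfire⟩
    have h : μ + a - lam - (μ - lam) ∈ firingSpan (Φp : Set V) lam :=
      sub_mem (Submodule.subset_span ⟨μ + a, hμ.tail hfire, rfl⟩)
        (Submodule.subset_span ⟨μ, hμ, rfl⟩)
    rw [sub_sub_sub_cancel_right, add_sub_cancel_left] at h
    exact h

/-- for a simply laced root system and a dominant weight `λ`, the firing span
equals the span of the simple roots that get fired along firing sequences from `λ`. -/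
theorem firingSpan_eq_span_fired_simples (Φ Φp Δ : Finset V)
    (hΦ : IsRootSystem (Φ : Set V)) (hp : IsPositiveSystem (Φ : Set V) (Φp : Set V))
    (hΔ : IsSimpleSystem (Φp : Set V) Δ)
    (hsl : IsSimplyLaced (Φ : Set V)) (hirr : IsIrreducibleRS (Φ : Set V))
    (lam : V) (hlam : lam ∈ weightLattice (Φ : Set V))
    (hdom : IsDominant (Δ : Set V) lam) :
    firingSpan (Φp : Set V) lam =
      Submodule.span ℝ {a : V | a ∈ Δ ∧
        ∃ mu, Relation.ReflTransGen (fire (Φp : Set V)) lam mu ∧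
          fire (Φp : Set V) mu (mu + a)} :=
  firingSpan_eq_span_fired_simples_general Φ Φp Δ hΦ hp hΔ hsl lam hlam hdom

end CF
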